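/- Let (S, Σ, μ) be a probability space, let {κ_s}_{s ∈ S} be a family of Markov kernels from ℝ^d to ℝ^d such that (s, u) ↦ κ_s(u)(B) is jointly measurable for every Borel set B, let κ̄ be a Markov kernel from ℝ^d to ℝ^d, and let ε, δ ≥ 0. Assume that for every u ∈ ℝ^d, μ{ s ∈ S : d_TV(κ_s(u), κ̄(u)) ≤ ε } ≥ 1 − δ. Then for every u ∈ ℝ^d and every integer T ≥ 1, d_TV( ∫_S κ_s^T(u) dμ(s), κ̄^T(u) ) ≤ T(δ + ε), where κ_s^T(u) denotes the T-fold iterate of the kernel κ_s applied at u (the same seed s reused in every step), and ∫_S κ_s^T(u) dμ(s) denotes the mixture measure B ↦ ∫_S κ_s^T(u)(B) dμ(s). -/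

import Mathlib

/-!
Induction on the number of steps, one measurable set `E` at a time. With
`g s y = κ_s^T(y)(E) ∈ [0, 1]`, one more step of the seeded chain gives
`∫ s, ∫ g s ∂κ_s(u) ∂μ`. For the seeds with `d_TV(κ_s(u), κ̄(u)) ≤ ε` the layer-cake formula
turns the total variation bound into `∫ g s ∂κ_s(u) ≤ ∫ g s ∂κ̄(u) + ε`, and the remaining
seeds have mass at most `δ` and contribute at most `1` each; so replacing `κ_s(u)` by `κ̄(u)`
costs `ε + δ`. After exchanging the integrals (Tonelli), the induction hypothesis applies to
`∫ s, g s y ∂μ` for every `y`. One-sided bounds suffice throughout: for probability measures,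
applying them to `Eᶜ` gives the other side.
-/

open MeasureTheory ProbabilityTheory

noncomputable def tvDist {X : Type*} [MeasurableSpace X] (μ ν : Measure X) : ℝ :=
  ⨆ E : {E : Set X // MeasurableSet E}, |(μ E.1).toReal - (ν E.1).toReal|

/-- Iterates of a (kernel-like) map `κ : X → Measure X`: `kIter κ 0 = κ` is the
one-step kernel `κ¹`, and `kIter κ T` is the `(T+1)`-fold iterate `κ^{T+1}`,
with `κ^{T+1}(u)(B) = ∫ κ(y)(B) d(κ^T(u))(y)`. -/
noncomputable def kIter {X : Type*} [MeasurableSpace X] (κ : X → Measure X) :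
    ℕ → X → Measure X
  | 0 => κ
  | T + 1 => fun u => (kIter κ T u).bind κ

open Function Set
open scoped ENNReal

section TotalVariation

variable {X : Type*} [MeasurableSpace X]

lemma abs_measureReal_sub_le_tvDist (α β : Measure X) [IsFiniteMeasure α] [IsFiniteMeasure β]
    {E : Set X} (hE : MeasurableSet E) : |α.real E - β.real E| ≤ tvDist α β := by
  refine le_ciSup (f := fun F : {F : Set X // MeasurableSet F} => |α.real F.1 - β.real F.1|)
    ⟨α.real univ + β.real univ, ?_⟩ ⟨E, hE⟩
  rintro _ ⟨F, rfl⟩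
  have hα : α.real F.1 ≤ α.real univ := measureReal_mono (subset_univ _)
  have hβ : β.real F.1 ≤ β.real univ := measureReal_mono (subset_univ _)
  rw [abs_sub_le_iff]
  constructor <;> linarith [measureReal_nonneg (μ := α) (s := F.1),
    measureReal_nonneg (μ := β) (s := F.1)]

lemma measure_le_add_of_tvDist_le {α β : Measure X} [IsFiniteMeasure α] [IsFiniteMeasure β]
    {ε : ℝ} (h : tvDist α β ≤ ε) {E : Set X} (hE : MeasurableSet E) :
    α E ≤ β E + ENNReal.ofReal ε := by
  have hreal : α.real E ≤ β.real E + ε :=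
    sub_le_iff_le_add'.1 ((le_abs_self _).trans ((abs_measureReal_sub_le_tvDist α β hE).trans h))
  calc α E = ENNReal.ofReal (α.real E) := (ofReal_measureReal (measure_ne_top α E)).symm
    _ ≤ ENNReal.ofReal (β.real E + ε) := ENNReal.ofReal_le_ofReal hreal
    _ ≤ β E + ENNReal.ofReal ε := by
      grw [ENNReal.ofReal_add_le, ofReal_measureReal (measure_ne_top β E)]

lemma tvDist_le_of_forall_measure_le_add {α β : Measure X} [IsProbabilityMeasure α]
    [IsProbabilityMeasure β] {r : ℝ} (hr : 0 ≤ r)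
    (h : ∀ E, MeasurableSet E → α E ≤ β E + ENNReal.ofReal r) : tvDist α β ≤ r := by
  have hreal : ∀ E, MeasurableSet E → α.real E ≤ β.real E + r := fun E hE => by
    have := ENNReal.toReal_mono (by finiteness) (h E hE)
    rwa [ENNReal.toReal_add (measure_ne_top _ _) ENNReal.ofReal_ne_top,
      ENNReal.toReal_ofReal hr] at this
  refine ciSup_le fun ⟨E, hE⟩ => abs_sub_le_iff.2 ⟨sub_le_iff_le_add'.2 (hreal E hE), ?_⟩
  have := hreal Eᶜ hE.compl
  rw [probReal_compl_eq_one_sub hE, probReal_compl_eq_one_sub hE] at this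
  change β.real E - α.real E ≤ r
  linarith

lemma lintegral_eq_setLIntegral_Ioc_measure_lt (m : Measure X) {g : X → ℝ≥0∞}
    (hg : Measurable g) (hg1 : ∀ y, g y ≤ 1) :
    ∫⁻ y, g y ∂m = ∫⁻ t in Ioc (0 : ℝ) 1, m {y | t < (g y).toReal} := by
  have hg_top : ∀ y, g y ≠ ∞ := fun y => ne_top_of_le_ne_top ENNReal.one_ne_top (hg1 y)
  have hempty : EqOn (fun t : ℝ => m {y | t < (g y).toReal}) 0 (Ioi 1) := fun t ht => by
    have : {y | t < (g y).toReal} = ∅ := eq_empty_of_forall_notMem fun y hy =>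
      (hy.trans_le (ENNReal.toReal_le_of_le_ofReal zero_le_one (by simpa using hg1 y))).not_gt ht
    simp [this]
  calc ∫⁻ y, g y ∂m = ∫⁻ y, ENNReal.ofReal (g y).toReal ∂m := by
        simp_rw [ENNReal.ofReal_toReal (hg_top _)]
    _ = ∫⁻ t in Ioi 0, m {y | t < (g y).toReal} :=
        lintegral_eq_lintegral_meas_lt m (ae_of_all _ fun _ => ENNReal.toReal_nonneg)
          hg.ennreal_toReal.aemeasurable
    _ = _ := by
        rw [← Ioc_union_Ioi_eq_Ioi zero_le_one,
          lintegral_union measurableSet_Ioi Ioc_disjoint_Ioi_same,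
          setLIntegral_eq_zero measurableSet_Ioi hempty, add_zero]

lemma lintegral_le_lintegral_add_of_forall_measure_le_add {α β : Measure X} {c : ℝ≥0∞}
    (h : ∀ E, MeasurableSet E → α E ≤ β E + c) {g : X → ℝ≥0∞} (hg : Measurable g)
    (hg1 : ∀ y, g y ≤ 1) : ∫⁻ y, g y ∂α ≤ ∫⁻ y, g y ∂β + c := by
  rw [lintegral_eq_setLIntegral_Ioc_measure_lt α hg hg1,
    lintegral_eq_setLIntegral_Ioc_measure_lt β hg hg1]
  calc _ ≤ ∫⁻ t in Ioc (0 : ℝ) 1, (β {y | t < (g y).toReal} + c) :=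
        lintegral_mono fun t => h _ (measurableSet_lt measurable_const hg.ennreal_toReal)
    _ = _ := by
        rw [lintegral_add_right _ measurable_const, setLIntegral_const, Real.volume_Ioc,
          sub_zero, ENNReal.ofReal_one, mul_one]

end TotalVariation

lemma lintegral_le_lintegral_add_add_of_one_sub_le_measure {S : Type*} [MeasurableSpace S]
    {μ : Measure S} [IsProbabilityMeasure μ] {F G : S → ℝ≥0∞} (hF : Measurable F)
    (hG : Measurable G) (hF1 : ∀ s, F s ≤ 1) {a b : ℝ≥0∞}
    (hμ : 1 - b ≤ μ {s | F s ≤ G s + a}) :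
    ∫⁻ s, F s ∂μ ≤ ∫⁻ s, G s ∂μ + a + b := by
  set H := {s | F s ≤ G s + a}
  have hH : MeasurableSet H := measurableSet_le hF (hG.add_const a)
  calc ∫⁻ s, F s ∂μ ≤ ∫⁻ s, G s + a + Hᶜ.indicator 1 s ∂μ := lintegral_mono fun s => by
        by_cases hs : s ∈ H
        · exact le_add_right hs
        · simpa [hs] using (hF1 s).trans le_add_self
    _ = ∫⁻ s, G s ∂μ + a + μ Hᶜ := by
        rw [lintegral_add_left (hG.add_const a), lintegral_add_right _ measurable_const,
          lintegral_const, measure_univ, mul_one, lintegral_indicator_one hH.compl]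
    _ ≤ ∫⁻ s, G s ∂μ + a + b := by
        grw [prob_compl_eq_one_sub hH, tsub_le_iff_tsub_le.1 hμ]

section Iterates

variable {X : Type*} [MeasurableSpace X]

lemma measurable_kIter {g : X → Measure X} (hg : Measurable g) (T : ℕ) :
    Measurable (kIter g T) := by
  induction T with
  | zero => exact hg
  | succ T ih => exact (Measure.measurable_bind' hg).comp ih

lemma kIter_succ' {g : X → Measure X} (hg : Measurable g) (T : ℕ) (u : X) :
    kIter g (T + 1) u = (g u).bind (kIter g T) := by
  induction T generalizing u with
  | zero => rfl
  | succ T ih =>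
    change (kIter g (T + 1) u).bind g = _
    rw [ih, Measure.bind_bind (measurable_kIter hg T).aemeasurable hg.aemeasurable]
    rfl

lemma kIter_succ_apply (κ : Kernel X X) (T : ℕ) (u : X) {E : Set X} (hE : MeasurableSet E) :
    kIter κ (T + 1) u E = ∫⁻ y, kIter κ T y E ∂(κ u) := by
  rw [kIter_succ' κ.measurable,
    Measure.bind_apply hE (measurable_kIter κ.measurable T).aemeasurable]

instance isProbabilityMeasure_kIter (κ : Kernel X X) [IsMarkovKernel κ] (T : ℕ) (u : X) :
    IsProbabilityMeasure (kIter κ T u) := by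
  induction T generalizing u with
  | zero => exact inferInstanceAs (IsProbabilityMeasure (κ u))
  | succ T ih => exact inferInstanceAs (IsProbabilityMeasure (κ ∘ₘ kIter κ T u))

end Iterates

section ReusedSeed

variable {S X : Type*} [MeasurableSpace S] [MeasurableSpace X]
  (κ : S → Kernel X X) [∀ s, IsMarkovKernel (κ s)]
  (hj : ∀ B : Set X, MeasurableSet B → Measurable fun q : S × X => κ q.1 q.2 B)

noncomputable def jointKernel : Kernel (S × X) X :=
  ⟨fun q => κ q.1 q.2, Measure.measurable_of_measurable_coe _ hj⟩

instance : IsMarkovKernel (jointKernel κ hj) :=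
  ⟨fun q => inferInstanceAs (IsProbabilityMeasure (κ q.1 q.2))⟩

include hj in
lemma measurable_lintegral_family {h : S × X → ℝ≥0∞} (hh : Measurable h) :
    Measurable fun q : S × X => ∫⁻ z, h (q.1, z) ∂(κ q.1 q.2) :=
  (hh.comp (measurable_fst.fst.prodMk measurable_snd)).lintegral_kernel_prod_right'
    (κ := jointKernel κ hj)

include hj in
lemma measurable_kIter_apply (T : ℕ) {E : Set X} (hE : MeasurableSet E) :
    Measurable fun q : S × X => kIter (κ q.1) T q.2 E := by
  induction T with
  | zero => exact hj E hE
  | succ T ih =>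
    simp_rw [kIter_succ_apply _ T _ hE]
    exact measurable_lintegral_family κ hj ih

variable {μ : Measure S} [IsProbabilityMeasure μ] (κbar : Kernel X X) [IsMarkovKernel κbar]
  {ε δ : ℝ}

include hj in
lemma lintegral_lintegral_le_add_of_tvDist_le (hδ : 0 ≤ δ) {u : X}
    (hclose : ENNReal.ofReal (1 - δ) ≤ μ {s | tvDist (κ s u) (κbar u) ≤ ε})
    {g : S → X → ℝ≥0∞} (hg : Measurable (uncurry g)) (hg1 : ∀ s y, g s y ≤ 1) :
    ∫⁻ s, ∫⁻ y, g s y ∂(κ s u) ∂μ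
      ≤ ∫⁻ y, ∫⁻ s, g s y ∂μ ∂(κbar u) + ENNReal.ofReal ε + ENNReal.ofReal δ := by
  have hF : Measurable fun s => ∫⁻ y, g s y ∂(κ s u) :=
    (measurable_lintegral_family κ hj hg).comp (measurable_id.prodMk measurable_const)
  rw [← lintegral_lintegral_swap hg.aemeasurable]
  refine lintegral_le_lintegral_add_add_of_one_sub_le_measure hF hg.lintegral_prod_right
    (fun s => (lintegral_mono (hg1 s)).trans (by simp)) ?_
  rw [← ENNReal.ofReal_one, ← ENNReal.ofReal_sub _ hδ]
  exact hclose.trans <| measure_mono fun s hs =>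
    lintegral_le_lintegral_add_of_forall_measure_le_add
      (fun E hE => measure_le_add_of_tvDist_le hs hE) (hg.comp measurable_prodMk_left) (hg1 s)

include hj in
lemma lintegral_kIter_le_add (hδ : 0 ≤ δ)
    (hclose : ∀ u, ENNReal.ofReal (1 - δ) ≤ μ {s | tvDist (κ s u) (κbar u) ≤ ε})
    (T : ℕ) (u : X) {E : Set X} (hE : MeasurableSet E) :
    ∫⁻ s, kIter (κ s) T u E ∂μ
      ≤ kIter κbar T u E + (T + 1) * (ENNReal.ofReal ε + ENNReal.ofReal δ) := by
  set c := ENNReal.ofReal ε + ENNReal.ofReal δ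
  induction T generalizing u with
  | zero =>
    have := lintegral_lintegral_le_add_of_tvDist_le κ hj κbar hδ (hclose u)
      (g := fun _ y => E.indicator 1 y) ((measurable_one.indicator hE).comp measurable_snd)
      (fun _ _ => indicator_apply_le' (fun _ => le_rfl) (fun _ => zero_le_one))
    simpa [lintegral_indicator_one hE, kIter, add_assoc] using this
  | succ T ih =>
    calc ∫⁻ s, kIter (κ s) (T + 1) u E ∂μ = ∫⁻ s, ∫⁻ z, kIter (κ s) T z E ∂(κ s u) ∂μ := by
          simp_rw [kIter_succ_apply _ T _ hE]
      _ ≤ ∫⁻ z, ∫⁻ s, kIter (κ s) T z E ∂μ ∂(κbar u) + c :=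
          (lintegral_lintegral_le_add_of_tvDist_le κ hj κbar hδ (hclose u)
            (g := fun s z => kIter (κ s) T z E) (measurable_kIter_apply κ hj T hE)
            fun _ _ => prob_le_one).trans_eq (add_assoc _ _ _)
      _ ≤ ∫⁻ z, (kIter κbar T z E + (T + 1) * c) ∂(κbar u) + c := by
          gcongr with z
          exact ih z
      _ = kIter κbar (T + 1) u E + (↑(T + 1) + 1) * c := by
          rw [lintegral_add_right _ measurable_const, lintegral_const, measure_univ, mul_one,
            ← kIter_succ_apply κbar T u hE]
          push_cast
          ring

end ReusedSeed

/-- Reused-randomness composition lemma: if for every `u`, with probability at least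
`1 - δ` over `s ∼ μ` we have `d_TV(κ_s(u), κ̄(u)) ≤ ε`, then the mixture over `s ∼ μ`
of the `T`-step iterates `κ_s^T(u)` (the same seed `s` reused in every step) is within
`T(δ + ε)` of `κ̄^T(u)` in total variation, for every `u` and every `T ≥ 1`. -/
theorem stmt3 {d : ℕ} {S : Type*} [MeasurableSpace S]
    (μ : Measure S) [IsProbabilityMeasure μ]
    (κ : S → ProbabilityTheory.Kernel (Fin d → ℝ) (Fin d → ℝ))
    (hκ : ∀ s, IsMarkovKernel (κ s))
    (hjoint : ∀ B : Set (Fin d → ℝ), MeasurableSet B →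
      Measurable (fun q : S × (Fin d → ℝ) => κ q.1 q.2 B))
    (κbar : ProbabilityTheory.Kernel (Fin d → ℝ) (Fin d → ℝ)) [IsMarkovKernel κbar]
    (ε δ : ℝ) (hε : 0 ≤ ε) (hδ : 0 ≤ δ)
    (hclose : ∀ u : Fin d → ℝ,
      ENNReal.ofReal (1 - δ) ≤ μ {s | tvDist (κ s u) (κbar u) ≤ ε}) :
    ∀ (u : Fin d → ℝ) (T : ℕ), 1 ≤ T →
      tvDist (μ.bind (fun s => kIter (fun x => κ s x) (T - 1) u))
          (kIter (fun x => κbar x) (T - 1) u)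
        ≤ (T : ℝ) * (δ + ε) := by
  intro u T hT
  obtain ⟨T, rfl⟩ := Nat.exists_eq_add_of_le' hT
  have := hκ
  rw [Nat.add_sub_cancel]
  have hmeas : Measurable fun s => kIter (fun x => κ s x) T u :=
    Measure.measurable_of_measurable_coe _ fun E hE =>
      (measurable_kIter_apply κ hjoint T hE).comp (measurable_id.prodMk measurable_const)
  have := isProbabilityMeasure_bind (m := μ) hmeas.aemeasurable (ae_of_all _ fun s =>
    isProbabilityMeasure_kIter (κ s) T u)
  refine tvDist_le_of_forall_measure_le_add (by positivity) fun E hE => ?_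
  rw [Measure.bind_apply hE hmeas.aemeasurable]
  refine (lintegral_kIter_le_add κ hjoint κbar hδ hclose T u hE).trans_eq ?_
  rw [ENNReal.ofReal_mul (by positivity), ENNReal.ofReal_add hδ hε, add_comm (ENNReal.ofReal δ)]
  push_cast
  rw [ENNReal.ofReal_add (by positivity) zero_le_one, ENNReal.ofReal_natCast, ENNReal.ofReal_one]
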